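/- Assume in addition that C is braided monoidal, and let n ≥ 0. Then the class VPol_n of very strong polynomial functors of degree ≤ n is closed under the following operations: (1) translation: if F ∈ VPol_n then τ_x(F) ∈ VPol_n for every object x of C; (2) kernels of epimorphisms: if 0 → G → F₁ → F₂ → 0 is a short exact sequence in Fct(C, A) with F₁ ∈ VPol_n and F₂ ∈ VPol_n, then G ∈ VPol_n; (3) extensions: if 0 → F₃ → H → F₄ → 0 is a short exact sequence in Fct(C, A) with F₃ ∈ VPol_n and F₄ ∈ VPol_n, then H ∈ VPol_n. -/

import Mathlib

open CategoryTheory CategoryTheory.Limits CategoryTheory.MonoidalCategory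

variable {C : Type*} [Category C] [MonoidalCategory C]
variable {A : Type*} [Category A] [Abelian A]

/-- The translation endofunctor `τ_x` of `Fct(C, A)`: precomposition with `x ⊗ -`. -/
noncomputable def tauF (A : Type*) [Category A] (x : C) : (C ⥤ A) ⥤ (C ⥤ A) :=
  (Functor.whiskeringLeft C C A).obj (tensorLeft x)

/-- The component `i_x(F) : F ⟶ τ_x F`, whose component at `c` is
`F` applied to `c ≅ 𝟙 ⊗ c ⟶ x ⊗ c`. -/
def iApp (hI : IsInitial (𝟙_ C)) (x : C) (F : C ⥤ A) : F ⟶ tensorLeft x ⋙ F where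
  app c := F.map ((λ_ c).inv ≫ hI.to x ▷ c)
  naturality c c' f := by
    dsimp
    rw [← F.map_comp, ← F.map_comp]
    congr 1
    rw [leftUnitor_inv_naturality_assoc, whisker_exchange, Category.assoc]

/-- The natural transformation `i_x : Id ⟶ τ_x` of endofunctors of `Fct(C, A)`. -/
noncomputable def iNT (hI : IsInitial (𝟙_ C)) (x : C) :
    𝟭 (C ⥤ A) ⟶ tauF A x where
  app F := iApp hI x F
  naturality F G η := by
    ext c
    exact (η.naturality _).symm

/-- The evanescence endofunctor `κ_x = ker(i_x)` of `Fct(C, A)`. -/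
noncomputable def kappaF (hI : IsInitial (𝟙_ C)) (x : C) : (C ⥤ A) ⥤ (C ⥤ A) :=
  kernel (iNT (A := A) hI x)

/-- The difference endofunctor `δ_x = coker(i_x)` of `Fct(C, A)`. -/
noncomputable def deltaF (hI : IsInitial (𝟙_ C)) (x : C) : (C ⥤ A) ⥤ (C ⥤ A) :=
  cokernel (iNT (A := A) hI x)

/-- `VPolAux hI (n+1) F` says that `F` is very strong polynomial of degree `≤ n`;
`VPolAux hI 0 F` says that `F` is the zero functor (degree `≤ -1`). -/
def VPolAux (hI : IsInitial (𝟙_ C)) : ℕ → (C ⥤ A) → Prop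
  | 0 => fun F => IsZero F
  | n + 1 => fun F => ∀ x : C,
      IsZero ((kappaF hI x).obj F) ∧ VPolAux hI n ((deltaF hI x).obj F)

/-- `VPol hI n F` : `F` is very strong polynomial of degree `≤ n`
(with `VPol_m = {0}` for `m < 0`). -/
def VPol (hI : IsInitial (𝟙_ C)) (n : ℤ) (F : C ⥤ A) : Prop :=
  VPolAux hI (n + 1).toNat F

/-!
Each of the three closure properties is proved by its own induction on the degree.

For translations: in a braided category `τ_x ∘ τ_y ≅ τ_y ∘ τ_x`, and this isomorphism carries
`i_y(τ_x F)` to `τ_x(i_y F)` because the braiding with the unit object is trivial. As `τ_x` is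
exact, it then commutes with `κ_y` and `δ_y`.

For kernels and extensions: `τ_x` is exact, so the snake lemma applied to `i_x` on a short exact
sequence `0 → F₁ → F₂ → F₃ → 0` gives an exact sequence
`0 → κ_x F₁ → κ_x F₂ → κ_x F₃ → δ_x F₁ → δ_x F₂ → δ_x F₃ → 0`.
The vanishing of the `κ_x` terms follows, and since `κ_x F₃ = 0` the `δ_x` terms form a short
exact sequence to which the induction hypothesis applies.
-/

section

instance (x : C) : PreservesFiniteLimits (tauF A x) := by
  unfold tauF; infer_instance

instance (x : C) : PreservesFiniteColimits (tauF A x) := by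
  unfold tauF; infer_instance

instance (x : C) : (tauF A x).PreservesZeroMorphisms := by
  unfold tauF; infer_instance

variable (hI : IsInitial (𝟙_ C))

noncomputable def kappaFObjIsoOfIsLimit (x : C) {F P : C ⥤ A} {ι : P ⟶ F}
    {w : ι ≫ (iNT hI x).app F = 0} (h : IsLimit (KernelFork.ofι ι w)) :
    P ≅ (kappaF hI x).obj F :=
  IsLimit.conePointUniqueUpToIso h
    (isLimitOfHasKernelOfPreservesLimit ((evaluation (C ⥤ A) (C ⥤ A)).obj F) (iNT hI x))

noncomputable def deltaFObjIsoOfIsColimit (x : C) {F P : C ⥤ A} {π : (tauF A x).obj F ⟶ P}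
    {w : (iNT hI x).app F ≫ π = 0} (h : IsColimit (CokernelCofork.ofπ π w)) :
    P ≅ (deltaF hI x).obj F :=
  IsColimit.coconePointUniqueUpToIso h
    (isColimitOfHasCokernelOfPreservesColimit ((evaluation (C ⥤ A) (C ⥤ A)).obj F) (iNT hI x))

variable {hI} in
theorem VPolAux.of_iso : ∀ {n : ℕ} {F G : C ⥤ A}, VPolAux hI n F → (F ≅ G) → VPolAux hI n G
  | 0, _, _, h, e => IsZero.of_iso h e.symm
  | _ + 1, _, _, h, e => fun x =>
      ⟨(h x).1.of_iso ((kappaF hI x).mapIso e).symm, (h x).2.of_iso ((deltaF hI x).mapIso e)⟩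

section Braided

variable [BraidedCategory C]

theorem whiskerLeft_fromUnit_comp_braiding_whiskerRight {x y c : C} (t : 𝟙_ C ⟶ y) :
    x ◁ ((λ_ c).inv ≫ t ▷ c) ≫ (α_ x y c).inv ≫ (β_ x y).hom ▷ c ≫ (α_ y x c).hom =
      (λ_ (x ⊗ c)).inv ≫ t ▷ (x ⊗ c) := by
  rw [MonoidalCategory.whiskerLeft_comp, Category.assoc,
    associator_inv_naturality_middle_assoc, ← comp_whiskerRight_assoc,
    BraidedCategory.braiding_naturality_right, braiding_tensorUnit_right]
  monoidal

variable (C) in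
def tensorLeftCommIso (x y : C) : tensorLeft y ⋙ tensorLeft x ≅ tensorLeft x ⋙ tensorLeft y :=
  (tensorLeftTensor x y).symm ≪≫ (tensoringLeft C).mapIso (β_ x y) ≪≫ tensorLeftTensor y x

variable (A) in
def tauFCommIso (x y : C) (F : C ⥤ A) :
    (tauF A y).obj ((tauF A x).obj F) ≅ (tauF A x).obj ((tauF A y).obj F) :=
  Functor.isoWhiskerRight (tensorLeftCommIso C x y) F

omit [Abelian A] in
theorem iNT_app_tauF_obj_comp_tauFCommIso_hom (x y : C) (F : C ⥤ A) :
    (iNT hI y).app ((tauF A x).obj F) ≫ (tauFCommIso A x y F).hom =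
      (tauF A x).map ((iNT hI y).app F) := by
  ext c
  dsimp [tauF, iNT, iApp, tauFCommIso, tensorLeftCommIso]
  rw [← F.map_comp, tensorLeftTensor_inv_app, whiskerLeft_fromUnit_comp_braiding_whiskerRight]

noncomputable def kappaFObjTauFObjIso (x y : C) (F : C ⥤ A) :
    (kappaF hI y).obj ((tauF A x).obj F) ≅ (tauF A x).obj ((kappaF hI y).obj F) :=
  PreservesKernel.iso ((evaluation (C ⥤ A) (C ⥤ A)).obj _) (iNT hI y) ≪≫
    kernel.mapIso _ _ (Iso.refl _) (tauFCommIso A x y F)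
      (by simp [iNT_app_tauF_obj_comp_tauFCommIso_hom]) ≪≫
    (PreservesKernel.iso (tauF A x) _).symm ≪≫
    (tauF A x).mapIso (PreservesKernel.iso ((evaluation (C ⥤ A) (C ⥤ A)).obj F) (iNT hI y)).symm

noncomputable def deltaFObjTauFObjIso (x y : C) (F : C ⥤ A) :
    (deltaF hI y).obj ((tauF A x).obj F) ≅ (tauF A x).obj ((deltaF hI y).obj F) :=
  PreservesCokernel.iso ((evaluation (C ⥤ A) (C ⥤ A)).obj _) (iNT hI y) ≪≫
    cokernel.mapIso _ _ (Iso.refl _) (tauFCommIso A x y F)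
      (by simp [iNT_app_tauF_obj_comp_tauFCommIso_hom]) ≪≫
    (PreservesCokernel.iso (tauF A x) _).symm ≪≫
    (tauF A x).mapIso (PreservesCokernel.iso ((evaluation (C ⥤ A) (C ⥤ A)).obj F) (iNT hI y)).symm

variable {hI} in
theorem VPolAux.tauF_obj (x : C) :
    ∀ {n : ℕ} {F : C ⥤ A}, VPolAux hI n F → VPolAux hI n ((tauF A x).obj F)
  | 0, _, h => (tauF A x).map_isZero h
  | _ + 1, F, h => fun y =>
      ⟨((tauF A x).map_isZero (h y).1).of_iso (kappaFObjTauFObjIso hI x y F),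
        (VPolAux.tauF_obj x (h y).2).of_iso (deltaFObjTauFObjIso hI x y F).symm⟩

end Braided

noncomputable def iNTSnakeInput (x : C) {S : ShortComplex (C ⥤ A)} (hS : S.ShortExact) :
    ShortComplex.SnakeInput (C ⥤ A) where
  L₀ := kernel (S.mapNatTrans (iNT hI x))
  L₁ := S
  L₂ := S.map (tauF A x)
  L₃ := cokernel (S.mapNatTrans (iNT hI x))
  v₀₁ := kernel.ι _
  v₁₂ := S.mapNatTrans (iNT hI x)
  v₂₃ := cokernel.π _
  w₀₂ := kernel.condition _
  w₁₃ := cokernel.condition _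
  h₀ := kernelIsKernel _
  h₃ := cokernelIsCokernel _
  L₁_exact := hS.exact
  epi_L₁_g := hS.epi_g
  L₂_exact := (hS.map_of_exact (tauF A x)).exact
  mono_L₂_f := (hS.map_of_exact (tauF A x)).mono_f

variable {hI}

theorem shortExact_iNTSnakeInput_L₃ {x : C} {S : ShortComplex (C ⥤ A)} (hS : S.ShortExact)
    (h₃ : IsZero ((kappaF hI x).obj S.X₃)) : (iNTSnakeInput hI x hS).L₃.ShortExact := by
  let D := iNTSnakeInput hI x hS
  have hL₀X₃ : IsZero D.L₀.X₃ := h₃.of_iso (kappaFObjIsoOfIsLimit hI x D.h₀τ₃)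
  have : Epi D.L₂.g := (hS.map_of_exact (tauF A x)).epi_g
  exact { exact := D.L₃_exact, epi_g := D.epi_L₃_g
          mono_f := D.L₂'_exact.mono_g (hL₀X₃.eq_of_src _ _) }

theorem VPolAux.X₁_of_shortExact : ∀ {n : ℕ} {S : ShortComplex (C ⥤ A)}, S.ShortExact →
    VPolAux hI n S.X₂ → VPolAux hI n S.X₃ → VPolAux hI n S.X₁
  | 0, S, hS, h₂, _ => by
      have := hS.mono_f
      exact h₂.of_mono S.f
  | _ + 1, S, hS, h₂, h₃ => fun x => by
      let D := iNTSnakeInput hI x hS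
      have : Mono D.L₁.f := hS.mono_f
      refine ⟨?_, ?_⟩
      · have hL₀X₂ : IsZero D.L₀.X₂ := (h₂ x).1.of_iso (kappaFObjIsoOfIsLimit hI x D.h₀τ₂)
        exact (hL₀X₂.of_mono D.L₀.f).of_iso (kappaFObjIsoOfIsLimit hI x D.h₀τ₁).symm
      · refine (VPolAux.X₁_of_shortExact (shortExact_iNTSnakeInput_L₃ hS (h₃ x).1) ?_ ?_).of_iso
          (deltaFObjIsoOfIsColimit hI x D.h₃τ₁)
        · exact (h₂ x).2.of_iso (deltaFObjIsoOfIsColimit hI x D.h₃τ₂).symm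
        · exact (h₃ x).2.of_iso (deltaFObjIsoOfIsColimit hI x D.h₃τ₃).symm

theorem VPolAux.X₂_of_shortExact : ∀ {n : ℕ} {S : ShortComplex (C ⥤ A)}, S.ShortExact →
    VPolAux hI n S.X₁ → VPolAux hI n S.X₃ → VPolAux hI n S.X₂
  | 0, _, hS, h₁, h₃ => hS.exact.isZero_X₂ (h₁.eq_of_src _ _) (h₃.eq_of_tgt _ _)
  | _ + 1, S, hS, h₁, h₃ => fun x => by
      let D := iNTSnakeInput hI x hS
      refine ⟨?_, ?_⟩
      · have hL₀X₁ : IsZero D.L₀.X₁ := (h₁ x).1.of_iso (kappaFObjIsoOfIsLimit hI x D.h₀τ₁)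
        have hL₀X₃ : IsZero D.L₀.X₃ := (h₃ x).1.of_iso (kappaFObjIsoOfIsLimit hI x D.h₀τ₃)
        exact (D.L₀_exact.isZero_X₂ (hL₀X₁.eq_of_src _ _) (hL₀X₃.eq_of_tgt _ _)).of_iso
          (kappaFObjIsoOfIsLimit hI x D.h₀τ₂).symm
      · refine (VPolAux.X₂_of_shortExact (shortExact_iNTSnakeInput_L₃ hS (h₃ x).1) ?_ ?_).of_iso
          (deltaFObjIsoOfIsColimit hI x D.h₃τ₂)
        · exact (h₁ x).2.of_iso (deltaFObjIsoOfIsColimit hI x D.h₃τ₁).symm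
        · exact (h₃ x).2.of_iso (deltaFObjIsoOfIsColimit hI x D.h₃τ₃).symm

end

/-- `VPol_n` is closed under translation, kernels of epimorphisms, and extensions. -/
theorem vpol_closure [BraidedCategory C] (hI : IsInitial (𝟙_ C)) (n : ℕ) :
    (∀ (F : C ⥤ A) (x : C), VPol hI n F → VPol hI n ((tauF A x).obj F)) ∧
    (∀ S : ShortComplex (C ⥤ A), S.ShortExact →
      VPol hI n S.X₂ → VPol hI n S.X₃ → VPol hI n S.X₁) ∧
    (∀ S : ShortComplex (C ⥤ A), S.ShortExact →
      VPol hI n S.X₁ → VPol hI n S.X₃ → VPol hI n S.X₂) :=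
  ⟨fun _ x => VPolAux.tauF_obj x, fun _ => VPolAux.X₁_of_shortExact,
    fun _ => VPolAux.X₂_of_shortExact⟩
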